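/- arXiv:0801.0526 — 5 statements merged into one kernel-verified Lean document; each statement's English description precedes it below -/
import Mathlib

section
/- For d ≥ 2, the (d²)×(d²) matrices K^d_{a,b,c,e} satisfy the product formula K^d_{a,b,c,e} · K^d_{a',b',c',e'} = K^d_{α,β,γ,δ} where α = aa'+(d−1)(bb'+cc')+(d−1)²ee', β = ab'+a'b+(d−1)(ce'+c'e)+(d−2)bb'+(d−1)(d−2)ee', γ = ac'+a'c+(d−1)(be'+b'e)+(d−2)cc'+(d−1)(d−2)ee', and δ = ae'+a'e+bc'+b'c+(d−2)(ce'+c'e+be'+b'e)+(d−2)²ee'. -/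
/-!
An entry of `K` depends only on which of the two coordinates of its row and column indices
agree. Summing out one coordinate at a time, every entry of the product reduces to sums
`∑ k, (if i = k then p else q) * (if k = i' then r else s)`, which split off the terms with
`k = i` or `k = i'` and leave `d - 1` or `d - 2` copies of `q * s`.
-/

/-- The (d²)×(d²) matrix, indexed by pairs, with entry `a` when both indices
agree, `b` when only the first agrees, `c` when only the second agrees, and
`e` otherwise. -/
def Kmat {R : Type*} [CommRing R] (d : ℕ) (a b c e : R) :
    Matrix (Fin d × Fin d) (Fin d × Fin d) R :=
  Matrix.of fun p q =>
    if p.1 = q.1 then (if p.2 = q.2 then a else b)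
    else (if p.2 = q.2 then c else e)

theorem Fintype.sum_ite_eq_mul_ite_eq {ι R : Type*} [Fintype ι] [DecidableEq ι] [CommRing R]
    (i i' : ι) (p q r s : R) :
    ∑ k, (if i = k then p else q) * (if k = i' then r else s) =
      if i = i' then p * r + ((Fintype.card ι : R) - 1) * (q * s)
      else p * s + q * r + ((Fintype.card ι : R) - 2) * (q * s) := by
  have ite_eq_add_ite : ∀ (x y : R) (P : Prop) [Decidable P],
      (if P then x else y) = y + if P then x - y else 0 := by
    intros; split_ifs <;> ring
  simp only [ite_eq_add_ite p q, ite_eq_add_ite r s, add_mul, mul_add, Finset.sum_add_distrib,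
    ← Finset.mul_sum, ite_mul, zero_mul, mul_ite, mul_zero, Finset.sum_ite_eq,
    Finset.sum_ite_eq', Finset.mem_univ, if_true, Finset.sum_const, Finset.card_univ, nsmul_eq_mul]
  split_ifs <;> ring

-- Restated so that the decidability instances mention `i'`, `j'` rather than `(i', j').2`,
-- which would block rewriting under the sums of a matrix product.
theorem Kmat_apply {R : Type*} [CommRing R] (d : ℕ) (a b c e : R) (i j i' j' : Fin d) :
    Kmat d a b c e (i, j) (i', j') =
      if i = i' then (if j = j' then a else b) else (if j = j' then c else e) :=
  rfl

theorem Kmat_mul_general {R : Type*} [CommRing R] (d : ℕ)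
    (a b c e a' b' c' e' : R) :
    Kmat d a b c e * Kmat d a' b' c' e' =
      Kmat d
        (a * a' + ((d : R) - 1) * (b * b' + c * c') + ((d : R) - 1) ^ 2 * (e * e'))
        (a * b' + a' * b + ((d : R) - 1) * (c * e' + c' * e) + ((d : R) - 2) * (b * b')
          + ((d : R) - 1) * ((d : R) - 2) * (e * e'))
        (a * c' + a' * c + ((d : R) - 1) * (b * e' + b' * e) + ((d : R) - 2) * (c * c')
          + ((d : R) - 1) * ((d : R) - 2) * (e * e'))
        (a * e' + a' * e + b * c' + b' * c
          + ((d : R) - 2) * (c * e' + c' * e + b * e' + b' * e)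
          + ((d : R) - 2) ^ 2 * (e * e')) := by
  ext ⟨i, j⟩ ⟨i', j'⟩
  simp only [Matrix.mul_apply, Fintype.sum_prod_type_right, Kmat_apply,
    Fintype.sum_ite_eq_mul_ite_eq, Finset.sum_ite_irrel, Finset.sum_add_distrib,
    ← Finset.mul_sum, Fintype.card_fin]
  split_ifs <;> ring

theorem Kmat_mul {R : Type*} [CommRing R] (d : ℕ) (hd : 2 ≤ d)
    (a b c e a' b' c' e' : R) :
    Kmat d a b c e * Kmat d a' b' c' e' =
      Kmat d
        (a * a' + ((d : R) - 1) * (b * b' + c * c') + ((d : R) - 1) ^ 2 * (e * e'))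
        (a * b' + a' * b + ((d : R) - 1) * (c * e' + c' * e) + ((d : R) - 2) * (b * b')
          + ((d : R) - 1) * ((d : R) - 2) * (e * e'))
        (a * c' + a' * c + ((d : R) - 1) * (b * e' + b' * e) + ((d : R) - 2) * (c * c')
          + ((d : R) - 1) * ((d : R) - 2) * (e * e'))
        (a * e' + a' * e + b * c' + b' * c
          + ((d : R) - 2) * (c * e' + c' * e + b * e' + b' * e)
          + ((d : R) - 2) ^ 2 * (e * e')) :=
  Kmat_mul_general d a b c e a' b' c' e'
end

section
/- For d ≥ 2, the minimal polynomial of K_d over ℚ is exactly (t−(d−1))(t−(2d−1))(t+1); in particular, d−1, 2d−1, and −1 are all eigenvalues of K_d. -/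
/-!
Write `J` for the all-ones `d × d` matrix. Then `K_d = P + Q - 1` with `P = 1 ⊗ J` and
`Q = J ⊗ 1`, which commute and satisfy `P² = d P`, `Q² = d Q`. Hence `x = K_d + 1 = P + Q`
satisfies `x (x - d) = 2 P Q` and `P Q (x - 2d) = 0`, so `(t + 1)(t - (d - 1))(t - (2d - 1))`
kills `K_d`. Its three roots are eigenvalues, with eigenvectors `1`, `(i, j) ↦ f j` and
`(i, j) ↦ f i f j` for any nonzero `f` with `∑ f = 0` (which exists once `d ≥ 2`); as the roots
are distinct, this polynomial is the minimal polynomial.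
-/

open Polynomial

/-- The (d²)×(d²) matrix `K_d` with entry 1 at `((i,j),(i',j'))` iff
`i = i'` or `j = j'`, and 0 otherwise. -/
def Kd (d : ℕ) : Matrix (Fin d × Fin d) (Fin d × Fin d) ℚ :=
  Matrix.of fun p q => if p.1 = q.1 ∨ p.2 = q.2 then 1 else 0

open Matrix Kronecker

theorem Polynomial.eq_prod_X_sub_C_of_dvd {K : Type*} [Field K] {p : K[X]} {s : Finset K}
    (hp : p.Monic) (hdvd : p ∣ ∏ μ ∈ s, (X - C μ)) (hroot : ∀ μ ∈ s, p.IsRoot μ) :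
    p = ∏ μ ∈ s, (X - C μ) :=
  eq_of_monic_of_associated hp (monic_prod_of_monic _ _ fun μ _ => monic_X_sub_C μ)
    (associated_of_dvd_dvd hdvd
      (Finset.prod_dvd_of_coprime
        ((pairwise_coprime_X_sub_C Function.injective_id).set_pairwise _)
        fun μ hμ => dvd_iff_isRoot.2 (hroot μ hμ)))

theorem Matrix.hasEigenvalue_mulVecLin_of_mulVec_eq_smul {R n : Type*} [CommRing R]
    [Fintype n] {M : Matrix n n R} {v : n → R} {μ : R} (hv : v ≠ 0) (hMv : M *ᵥ v = μ • v) :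
    Module.End.HasEigenvalue M.mulVecLin μ :=
  Module.End.hasEigenvalue_of_hasEigenvector ⟨Module.End.mem_eigenspace_iff.2 hMv, hv⟩

theorem exists_ne_zero_sum_eq_zero {R n : Type*} [Ring R] [Nontrivial R] [Fintype n]
    [Nontrivial n] : ∃ f : n → R, f ≠ 0 ∧ ∑ i, f i = 0 := by
  classical
  obtain ⟨a, b, hab⟩ := exists_pair_ne n
  refine ⟨Pi.single a 1 - Pi.single b 1, fun h => ?_, ?_⟩
  · simpa [hab] using congrFun h a
  · simp [Finset.sum_sub_distrib]

theorem Commute.add_mul_add_sub_smul_mul_add_sub_two_smul_eq_zero {K A : Type*} [CommRing K]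
    [Ring A] [Algebra K A] {P Q : A} {c : K} (hPQ : Commute P Q) (hP : P * P = c • P)
    (hQ : Q * Q = c • Q) :
    (P + Q) * (P + Q - c • 1) * (P + Q - (2 * c) • 1) = 0 := by
  have hsq : (P + Q) * (P + Q - c • 1) = 2 • (P * Q) := by
    rw [mul_sub, add_mul, mul_add, mul_add, hP, hQ, ← hPQ.eq, mul_smul_one]
    module
  have hPQP : P * Q * P = c • (P * Q) := by
    rw [mul_assoc, ← hPQ.eq, ← mul_assoc, hP, smul_mul_assoc]
  have hPQQ : P * Q * Q = c • (P * Q) := by rw [mul_assoc, hQ, mul_smul_comm]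
  rw [hsq, smul_mul_assoc, mul_sub, mul_add, hPQP, hPQQ, mul_smul_one]
  module

section onesMatrix

variable (n R : Type*) [Fintype n] [CommRing R]

def onesMatrix : Matrix n n R := of fun _ _ => 1

theorem onesMatrix_mul_self :
    onesMatrix n R * onesMatrix n R = (Fintype.card n : R) • onesMatrix n R := by
  ext i j
  simp [onesMatrix, mul_apply]

variable {n R} {m : Type*} [Fintype m]

theorem one_kronecker_onesMatrix_mulVec_apply [DecidableEq m] (v : m × n → R) (i : m) (j : n) :
    ((1 : Matrix m m R) ⊗ₖ onesMatrix n R *ᵥ v) (i, j) = ∑ j', v (i, j') := by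
  simp only [onesMatrix, mulVec, dotProduct, Fintype.sum_prod_type, kroneckerMap_apply,
    of_apply, one_apply, ite_mul, one_mul, zero_mul, mul_one]
  rw [Finset.sum_comm]
  simp

theorem onesMatrix_kronecker_one_mulVec_apply [DecidableEq n] (v : m × n → R) (i : m) (j : n) :
    (onesMatrix m R ⊗ₖ (1 : Matrix n n R) *ᵥ v) (i, j) = ∑ i', v (i', j) := by
  simp [onesMatrix, mulVec, dotProduct, Fintype.sum_prod_type, one_apply, ite_mul]

end onesMatrix

theorem Kd_eq_kronecker (d : ℕ) :
    Kd d = 1 ⊗ₖ onesMatrix (Fin d) ℚ + onesMatrix (Fin d) ℚ ⊗ₖ 1 - 1 := by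
  ext ⟨i, j⟩ ⟨i', j'⟩
  by_cases hi : i = i' <;> by_cases hj : j = j' <;> simp [Kd, onesMatrix, one_apply, hi, hj]

theorem Kd_mulVec_apply {d : ℕ} (v : Fin d × Fin d → ℚ) (i j : Fin d) :
    (Kd d *ᵥ v) (i, j) = ∑ j', v (i, j') + ∑ i', v (i', j) - v (i, j) := by
  rw [Kd_eq_kronecker, sub_mulVec, add_mulVec, one_mulVec, Pi.sub_apply, Pi.add_apply,
    one_kronecker_onesMatrix_mulVec_apply, onesMatrix_kronecker_one_mulVec_apply]

theorem Kd_aeval_eq_zero (d : ℕ) :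
    aeval (Kd d) ((X - C (-1)) * (X - C ((d : ℚ) - 1)) * (X - C (2 * (d : ℚ) - 1))) = 0 := by
  set P := (1 : Matrix (Fin d) (Fin d) ℚ) ⊗ₖ onesMatrix (Fin d) ℚ
  set Q := onesMatrix (Fin d) ℚ ⊗ₖ (1 : Matrix (Fin d) (Fin d) ℚ)
  have hPQ : Commute P Q := by
    simp only [P, Q, Commute, SemiconjBy, ← mul_kronecker_mul, one_mul, mul_one]
  have hP : P * P = (d : ℚ) • P := by
    rw [← mul_kronecker_mul, one_mul, onesMatrix_mul_self, kronecker_smul, Fintype.card_fin]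
  have hQ : Q * Q = (d : ℚ) • Q := by
    rw [← mul_kronecker_mul, one_mul, onesMatrix_mul_self, smul_kronecker, Fintype.card_fin]
  have hfactor (a : ℚ) : aeval (Kd d) (X - C a) = P + Q - (a + 1) • 1 := by
    rw [map_sub, aeval_X, aeval_C, Algebra.algebraMap_eq_smul_one, Kd_eq_kronecker]
    module
  rw [map_mul, map_mul, hfactor, hfactor, hfactor, neg_add_cancel, zero_smul, sub_zero,
    sub_add_cancel, sub_add_cancel]
  exact hPQ.add_mul_add_sub_smul_mul_add_sub_two_smul_eq_zero hP hQ

theorem Kd_hasEigenvalue_two_mul_sub_one {d : ℕ} (hd : 0 < d) :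
    Module.End.HasEigenvalue (Kd d).mulVecLin (2 * (d : ℚ) - 1) := by
  refine hasEigenvalue_mulVecLin_of_mulVec_eq_smul (v := fun _ => 1)
    (Function.ne_iff.2 ⟨(⟨0, hd⟩, ⟨0, hd⟩), one_ne_zero⟩) ?_
  ext ⟨i, j⟩
  simp [Kd_mulVec_apply]
  ring

theorem Kd_hasEigenvalue_sub_one {d : ℕ} (hd : 2 ≤ d) :
    Module.End.HasEigenvalue (Kd d).mulVecLin ((d : ℚ) - 1) := by
  have := Fin.nontrivial_iff_two_le.2 hd
  obtain ⟨f, hf, hfsum⟩ := exists_ne_zero_sum_eq_zero (R := ℚ) (n := Fin d)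
  obtain ⟨i, hi⟩ : ∃ i, f i ≠ 0 := Function.ne_iff.1 hf
  refine hasEigenvalue_mulVecLin_of_mulVec_eq_smul (v := fun p => f p.2)
    (Function.ne_iff.2 ⟨(i, i), hi⟩) ?_
  ext ⟨i, j⟩
  simp [Kd_mulVec_apply, hfsum]
  ring

theorem Kd_hasEigenvalue_neg_one {d : ℕ} (hd : 2 ≤ d) :
    Module.End.HasEigenvalue (Kd d).mulVecLin (-1) := by
  have := Fin.nontrivial_iff_two_le.2 hd
  obtain ⟨f, hf, hfsum⟩ := exists_ne_zero_sum_eq_zero (R := ℚ) (n := Fin d)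
  obtain ⟨i, hi⟩ : ∃ i, f i ≠ 0 := Function.ne_iff.1 hf
  refine hasEigenvalue_mulVecLin_of_mulVec_eq_smul (v := fun p => f p.1 * f p.2)
    (Function.ne_iff.2 ⟨(i, i), mul_ne_zero hi hi⟩) ?_
  ext ⟨i, j⟩
  simp [Kd_mulVec_apply, ← Finset.mul_sum, ← Finset.sum_mul, hfsum]

theorem Kd_minpoly (d : ℕ) (hd : 2 ≤ d) :
    minpoly ℚ (Kd d) =
      (X - C ((d : ℚ) - 1)) * (X - C (2 * (d : ℚ) - 1)) * (X + C 1) ∧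
    Module.End.HasEigenvalue (Matrix.mulVecLin (Kd d)) ((d : ℚ) - 1) ∧
    Module.End.HasEigenvalue (Matrix.mulVecLin (Kd d)) (2 * (d : ℚ) - 1) ∧
    Module.End.HasEigenvalue (Matrix.mulVecLin (Kd d)) (-1) := by
  have ha := Kd_hasEigenvalue_sub_one hd
  have hb := Kd_hasEigenvalue_two_mul_sub_one (by omega : 0 < d)
  have hc := Kd_hasEigenvalue_neg_one hd
  have hd0 : (d : ℚ) ≠ 0 := by positivity
  have hprod : ∏ μ ∈ {-1, (d : ℚ) - 1, 2 * (d : ℚ) - 1}, (X - C μ) =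
      (X - C (-1)) * (X - C ((d : ℚ) - 1)) * (X - C (2 * (d : ℚ) - 1)) := by
    rw [Finset.prod_insert, Finset.prod_pair, mul_assoc]
    · intro h; apply hd0; linarith
    · simp only [Finset.mem_insert, Finset.mem_singleton, not_or]
      constructor <;> intro h <;> apply hd0 <;> linarith
  have hroot : ∀ μ ∈ ({-1, (d : ℚ) - 1, 2 * (d : ℚ) - 1} : Finset ℚ),
      (minpoly ℚ (Kd d)).IsRoot μ := by
    simp only [Finset.mem_insert, Finset.mem_singleton, ← minpoly_toLin', toLin'_apply',
      ← Module.End.hasEigenvalue_iff_isRoot]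
    rintro μ (rfl | rfl | rfl) <;> assumption
  have hmin := eq_prod_X_sub_C_of_dvd (minpoly.monic (Algebra.IsIntegral.isIntegral _))
    (hprod ▸ minpoly.dvd ℚ _ (Kd_aeval_eq_zero d)) hroot
  refine ⟨?_, ha, hb, hc⟩
  rw [hmin, hprod, map_neg, sub_neg_eq_add]
  ring
end

section
/- Let d ≥ 2 and index a set of d² 'lines' by pairs (p,q) ∈ {1,…,d}², with intersection pairing L_{p,q}·L_{p',q'} equal to −d+2 if (p,q)=(p',q'), equal to 1 if exactly one of p=p' or q=q' holds (i.e. p=p' or q=q' but not both), and 0 otherwise. Then the rank of the resulting (d²)×(d²) intersection matrix is (d−1)² + 1. -/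
/-!
Writing `J` for the all-ones `d × d` matrix, the intersection matrix is the Kronecker sum
`J ⊗ 1 + 1 ⊗ J - d • 1`. The vectors `𝟙` and `e k - e 0` (`k ≠ 0`) form an eigenbasis of `J`
with eigenvalues `d` and `0`, so their Kronecker products diagonalise the intersection matrix,
with eigenvalue `d` once, `0` on the `2 (d - 1)` mixed pairs, and `-d` on the `(d - 1) ^ 2`
remaining ones. The rank is the number `(d - 1) ^ 2 + 1` of nonzero eigenvalues.
-/

/-- The intersection matrix of the d² lines `L_{p,q}`: self-intersection
`−d+2`, intersection number 1 if exactly one of `p = p'`, `q = q'` holds,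
and 0 otherwise. -/
def interMat (d : ℕ) : Matrix (Fin d × Fin d) (Fin d × Fin d) ℚ :=
  Matrix.of fun p q =>
    if p = q then -(d : ℚ) + 2
    else if (p.1 = q.1 ∧ p.2 ≠ q.2) ∨ (p.1 ≠ q.1 ∧ p.2 = q.2) then 1 else 0

open Matrix Kronecker Fintype

namespace Matrix

variable {n R : Type*} [Fintype n] [DecidableEq n]

lemma rank_eq_of_mul_eq_mul [CommRing R] {A B P : Matrix n n R} (hP : IsUnit P.det)
    (h : A * P = P * B) : A.rank = B.rank := by
  rw [← rank_mul_eq_left_of_isUnit_det P A hP, h, rank_mul_eq_right_of_isUnit_det P B hP]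

lemma kroneckerSum_sub_smul_mul_kronecker {m : Type*} [Fintype m] [DecidableEq m] [CommRing R]
    {A P : Matrix n n R} {B Q : Matrix m m R} {a : n → R} {b : m → R}
    (hA : A * P = P * diagonal a) (hB : B * Q = Q * diagonal b) (c : R) :
    (A ⊗ₖ 1 + 1 ⊗ₖ B - c • 1) * (P ⊗ₖ Q) = (P ⊗ₖ Q) * diagonal fun p => a p.1 + b p.2 - c := by
  have hdiag : diagonal (fun p : n × m => a p.1 + b p.2 - c)
      = diagonal a ⊗ₖ 1 + 1 ⊗ₖ diagonal b - c • 1 := by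
    rw [← diagonal_one, ← diagonal_one, diagonal_kronecker_diagonal, diagonal_kronecker_diagonal,
      ← diagonal_one, ← diagonal_smul, diagonal_add, diagonal_sub]
    congr 1; ext p; simp
  rw [hdiag, sub_mul, add_mul, mul_sub, mul_add, ← mul_kronecker_mul, ← mul_kronecker_mul,
    ← mul_kronecker_mul, ← mul_kronecker_mul, hA, hB, smul_mul_assoc, mul_smul_comm]
  simp only [one_mul, mul_one]

section Field

variable {K : Type*} [Field K]

variable (K) in
def onesEigenbasis (i₀ : n) : Matrix n n K :=
  of fun i k => if k = i₀ then 1 else (if i = k then 1 else 0) - (if i = i₀ then 1 else 0)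

variable (K) in
def onesEigenbasisInv (i₀ : n) : Matrix n n K :=
  of fun k j => if k = i₀ then (card n : K)⁻¹ else (if k = j then 1 else 0) - (card n : K)⁻¹

lemma sum_onesEigenbasis_apply (i₀ k : n) :
    ∑ i, onesEigenbasis K i₀ i k = if k = i₀ then (card n : K) else 0 := by
  by_cases hk : k = i₀ <;> simp [onesEigenbasis, hk, Finset.sum_sub_distrib]

lemma of_one_mul_onesEigenbasis (i₀ : n) :
    of 1 * onesEigenbasis K i₀ = onesEigenbasis K i₀ * diagonal (Pi.single i₀ (card n : K)) := by
  ext i k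
  rw [mul_diagonal, mul_apply]
  simp only [of_apply, Pi.one_apply, one_mul, sum_onesEigenbasis_apply]
  by_cases hk : k = i₀ <;> simp [onesEigenbasis, hk]

lemma onesEigenbasisInv_mul_onesEigenbasis {i₀ : n} (hn : (card n : K) ≠ 0) :
    onesEigenbasisInv K i₀ * onesEigenbasis K i₀ = 1 := by
  ext k j
  rw [mul_apply]
  by_cases hk : k = i₀
  · subst hk
    simp only [onesEigenbasisInv, of_apply, if_true, ← Finset.mul_sum, sum_onesEigenbasis_apply]
    by_cases hj : k = j <;> simp [hj, Ne.symm, hn, one_apply]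
  · simp only [onesEigenbasisInv, of_apply, hk, if_false, sub_mul, Finset.sum_sub_distrib,
      ← Finset.mul_sum, sum_onesEigenbasis_apply, ite_mul, one_mul, zero_mul, Finset.sum_ite_eq,
      Finset.mem_univ]
    by_cases hj : j = i₀ <;> simp [hj, hk, hn, onesEigenbasis, one_apply]

end Field

end Matrix

section Counting

variable {n : Type*} [DecidableEq n]

lemma Pi.single_add_single_sub_ne_zero_iff {G : Type*} [AddGroup G] {c : G} (hc : c ≠ 0)
    (i₀ i j : n) :
    (Pi.single i₀ c : n → G) i + (Pi.single i₀ c : n → G) j - c ≠ 0 ↔ (i = i₀ ↔ j = i₀) := by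
  by_cases hi : i = i₀ <;> by_cases hj : j = i₀ <;> simp [hi, hj, hc]

lemma card_fst_eq_iff_snd_eq [Fintype n] (i₀ : n) :
    card {p : n × n // (p.1 = i₀ ↔ p.2 = i₀)} = (card n - 1) ^ 2 + 1 := by
  have hsplit : (Finset.univ.filter fun p : n × n => (p.1 = i₀ ↔ p.2 = i₀))
      = {(i₀, i₀)} ∪ (Finset.univ.erase i₀ ×ˢ Finset.univ.erase i₀) := by
    ext ⟨i, j⟩
    by_cases hi : i = i₀ <;> by_cases hj : j = i₀ <;> simp [hi, hj]
  rw [Fintype.card_subtype, hsplit, Finset.card_union_of_disjoint (by simp), Finset.card_product,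
    Finset.card_erase_of_mem (Finset.mem_univ _), Finset.card_univ, Finset.card_singleton, sq,
    add_comm]

end Counting

lemma interMat_eq_kroneckerSum (d : ℕ) : interMat d = of 1 ⊗ₖ 1 + 1 ⊗ₖ of 1 - (d : ℚ) • 1 := by
  ext p q
  simp only [interMat, of_apply, Matrix.add_apply, Matrix.sub_apply, Matrix.smul_apply,
    kroneckerMap_apply, one_apply, Pi.one_apply, Prod.ext_iff]
  by_cases h₁ : p.1 = q.1 <;> by_cases h₂ : p.2 = q.2 <;> simp [h₁, h₂]; ring

theorem interMat_rank (d : ℕ) (hd : 2 ≤ d) :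
    (interMat d).rank = (d - 1) ^ 2 + 1 := by
  have : NeZero d := ⟨by omega⟩
  have hd₀ : (d : ℚ) ≠ 0 := by positivity
  have hP : IsUnit (onesEigenbasis ℚ (0 : Fin d)).det :=
    isUnit_det_of_left_inverse (onesEigenbasisInv_mul_onesEigenbasis (by simpa using hd₀))
  have hPP : IsUnit (onesEigenbasis ℚ (0 : Fin d) ⊗ₖ onesEigenbasis ℚ (0 : Fin d)).det := by
    rw [det_kronecker]
    exact (hP.pow _).mul (hP.pow _)
  have hJ := of_one_mul_onesEigenbasis (K := ℚ) (0 : Fin d)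
  rw [Fintype.card_fin] at hJ
  rw [interMat_eq_kroneckerSum,
    rank_eq_of_mul_eq_mul hPP (kroneckerSum_sub_smul_mul_kronecker hJ hJ _), rank_diagonal,
    Fintype.card_congr (Equiv.subtypeEquivRight fun p : Fin d × Fin d =>
      Pi.single_add_single_sub_ne_zero_iff hd₀ 0 p.1 p.2),
    card_fst_eq_iff_snd_eq, Fintype.card_fin]
end

section
/- Let λ ∈ ℂ \ {0,1}, φ(x,y) = yx(y−x)(y−λx), and p ∈ ℂ with p⁴ = 1/(λ−1)². Then the line defined by x = pz − pt, y = λpz − pt is contained in the surface φ(x,y) = φ(z,t) in ℙ³. -/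
/-! Along the line, `y - x = p(λ-1)z` and `y - λx = p(λ-1)t`, so `φ(x, y)` is `p⁴(λ-1)² φ(z, t)`,
and the condition on `p` makes the scaling factor `1`. -/

def quarticForm {R : Type*} [CommRing R] (l x y : R) : R :=
  y * x * (y - x) * (y - l * x)

theorem quarticForm_line {R : Type*} [CommRing R] (l p z t : R) :
    quarticForm l (p * z - p * t) (l * p * z - p * t) = p ^ 4 * (l - 1) ^ 2 * quarticForm l z t := by
  unfold quarticForm
  ring

theorem line_s1_on_surface_general (l p : ℂ) (h1 : l ≠ 1)
    (hp : p ^ 4 = 1 / (l - 1) ^ 2) (z t : ℂ) :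
    (l * p * z - p * t) * (p * z - p * t)
        * ((l * p * z - p * t) - (p * z - p * t))
        * ((l * p * z - p * t) - l * (p * z - p * t)) =
      t * z * (t - z) * (t - l * z) := by
  have hscale : p ^ 4 * (l - 1) ^ 2 = 1 := by
    rw [hp, one_div, inv_mul_cancel₀ (pow_ne_zero 2 (sub_ne_zero.mpr h1))]
  have h := quarticForm_line l p z t
  rw [hscale, one_mul] at h
  exact h

/-- The line `x = p z − p t`, `y = λ p z − p t` (with `p⁴ = 1/(λ−1)²`) lies on
the quartic surface `φ(x,y) = φ(z,t)` where `φ(x,y) = y x (y−x)(y−λx)`. -/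
theorem line_s1_on_surface (l p : ℂ) (h0 : l ≠ 0) (h1 : l ≠ 1)
    (hp : p ^ 4 = 1 / (l - 1) ^ 2) (z t : ℂ) :
    (l * p * z - p * t) * (p * z - p * t)
        * ((l * p * z - p * t) - (p * z - p * t))
        * ((l * p * z - p * t) - l * (p * z - p * t)) =
      t * z * (t - z) * (t - l * z) :=
  line_s1_on_surface_general l p h1 hp z t
end

section
/- Let λ ∈ ℂ \ {0,1}, φ(x,y) = yx(y−x)(y−λx), and p ∈ ℂ with p⁴ = 1/λ². Then the line defined by x = pt, y = λpz is contained in the surface φ(x,y) = φ(z,t) in ℙ³. -/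
theorem quarticForm_scaled_swap {R : Type*} [CommRing R] (l p z t : R) :
    quarticForm l (p * t) (l * p * z) = l ^ 2 * p ^ 4 * quarticForm l z t := by
  unfold quarticForm
  ring

theorem line_s2_on_surface_general (l p : ℂ) (h0 : l ≠ 0)
    (hp : p ^ 4 = 1 / l ^ 2) (z t : ℂ) :
    (l * p * z) * (p * t) * ((l * p * z) - (p * t))
        * ((l * p * z) - l * (p * t)) =
      t * z * (t - z) * (t - l * z) := by
  have hlp : l ^ 2 * p ^ 4 = 1 := by
    rw [hp, mul_one_div_cancel (pow_ne_zero 2 h0)]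
  show quarticForm l (p * t) (l * p * z) = quarticForm l z t
  rw [quarticForm_scaled_swap, hlp, one_mul]

/-- The line `x = p t`, `y = λ p z` (with `p⁴ = 1/λ²`) lies on the quartic
surface `φ(x,y) = φ(z,t)` where `φ(x,y) = y x (y−x)(y−λx)`. -/
theorem line_s2_on_surface (l p : ℂ) (h0 : l ≠ 0) (h1 : l ≠ 1)
    (hp : p ^ 4 = 1 / l ^ 2) (z t : ℂ) :
    (l * p * z) * (p * t) * ((l * p * z) - (p * t))
        * ((l * p * z) - l * (p * t)) =
      t * z * (t - z) * (t - l * z) :=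
  line_s2_on_surface_general l p h0 hp z t
end
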